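/- arXiv:1604.07453 — 4 statements merged into one kernel-verified Lean document; each statement's English description precedes it below -/
import Mathlib

section
/- Let G be a connected finite simple graph on V ≥ 2 vertices, let λ₁(G) denote the second-smallest eigenvalue of its Laplacian matrix, and let e(G) denote its edge connectivity. Then λ₁(G) ≥ 2·e(G)·(1 − cos(π/V)). -/
/-!
Sort the vertices so that `x` is nondecreasing along the order and let `Y` be the sorted vector.
Every proper prefix of the order is a cut crossed by at least `e(G)` edges, and an edge between
positions `a < b` contributes `(Y b - Y a)^2 ≥ ∑_{a ≤ k < b} (Y (k+1) - Y k)^2`, all gaps being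
nonnegative. Hence `xᵀ L x ≥ e(G) ∑_k (Y (k+1) - Y k)^2`: `e(G)` times the Laplacian form of the
path on `V` vertices at `Y`, whose second eigenvalue is `2 (1 - cos (π / V))`. That last bound, a
discrete Wirtinger inequality, is Cauchy–Schwarz weighted by the increments of the path's Fiedler
vector `m ↦ -cos ((2m+1) π / (2V))`.
-/

open Matrix Finset Real

/-- The second-smallest eigenvalue (counted with multiplicity) of the Laplacian matrix of a
finite simple graph `G`.  Since the constant vector is always an eigenvector of the Laplacian
with eigenvalue `0`, by the Courant–Fischer min-max principle this equals the infimum of the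
Rayleigh quotient `⟨x, L x⟩ / ⟨x, x⟩` over nonzero vectors `x` orthogonal to the constants. -/
noncomputable def SimpleGraph.lambdaOne {V : Type*} [Fintype V] [DecidableEq V]
    (G : SimpleGraph V) [DecidableRel G.Adj] : ℝ :=
  sInf { r : ℝ | ∃ x : V → ℝ, x ≠ 0 ∧ (∑ v, x v) = 0 ∧
    r = (x ⬝ᵥ (G.lapMatrix ℝ *ᵥ x)) / (x ⬝ᵥ x) }

/-- The edge connectivity of a finite simple graph `G`: the minimal number of edges that have
to be removed from `G` to make the resulting graph disconnected. -/
noncomputable def SimpleGraph.edgeConnectivity {V : Type*} [Fintype V]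
    (G : SimpleGraph V) : ℕ :=
  sInf { k : ℕ | ∃ F : Finset (Sym2 V), ↑F ⊆ G.edgeSet ∧
    ¬ (G.deleteEdges ↑F).Connected ∧ F.card = k }

theorem sum_range_sum_range_sq_sub (y : ℕ → ℝ) (n : ℕ) :
    ∑ j ∈ range n, ∑ i ∈ range j, (y j - y i) ^ 2 =
      n * ∑ i ∈ range n, y i ^ 2 - (∑ i ∈ range n, y i) ^ 2 := by
  induction n with
  | zero => simp
  | succ n ih =>
    have hlast : ∑ i ∈ range n, (y n - y i) ^ 2 =
        n * y n ^ 2 - 2 * y n * ∑ i ∈ range n, y i + ∑ i ∈ range n, y i ^ 2 := by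
      simp only [sub_sq, sum_add_distrib, sum_sub_distrib, sum_const, card_range, nsmul_eq_mul,
        mul_sum]
    rw [sum_range_succ, ih, hlast, sum_range_succ, sum_range_succ]
    push_cast
    ring

theorem sum_range_sum_range_sum_Ico_comm {M : Type*} [AddCommMonoid M] (n : ℕ)
    (f : ℕ → ℕ → ℕ → M) :
    ∑ j ∈ range n, ∑ i ∈ range j, ∑ k ∈ Ico i j, f i j k =
      ∑ k ∈ range (n - 1), ∑ j ∈ Ico (k + 1) n, ∑ i ∈ range (k + 1), f i j k := by
  calc _ = ∑ j ∈ range n, ∑ k ∈ range j, ∑ i ∈ range (k + 1), f i j k :=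
        sum_congr rfl fun j _ => sum_comm' fun i k => by simp only [mem_range, mem_Ico]; omega
    _ = _ := sum_comm' fun j k => by simp only [mem_range, mem_Ico]; omega

theorem sum_Ico_sum_range_sub_of_sum_eq_zero {W : ℕ → ℝ} {n k : ℕ}
    (hW : ∑ i ∈ range n, W i = 0) (hk : k < n) :
    ∑ j ∈ Ico (k + 1) n, ∑ i ∈ range (k + 1), (W j - W i) = -(n * ∑ i ∈ range (k + 1), W i) := by
  have htail : ∑ j ∈ Ico (k + 1) n, W j = -∑ i ∈ range (k + 1), W i := by
    rw [sum_Ico_eq_sub _ hk, hW, zero_sub]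
  simp only [sum_sub_distrib, sum_const, card_range, Nat.card_Ico, nsmul_eq_mul, ← mul_sum, htail]
  rw [Nat.cast_sub hk]
  push_cast
  ring

theorem sq_sub_le_mul_sum_sq_div {y W : ℕ → ℝ} {i j : ℕ} (hij : i ≤ j)
    (hW : ∀ k ∈ Ico i j, W k < W (k + 1)) :
    (y j - y i) ^ 2 ≤
      (W j - W i) * ∑ k ∈ Ico i j, (y (k + 1) - y k) ^ 2 / (W (k + 1) - W k) := by
  rw [← sum_Ico_sub y hij, ← sum_Ico_sub W hij]
  refine sum_sq_le_sum_mul_sum_of_sq_le_mul _ (fun k hk => (sub_pos.2 (hW k hk)).le)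
    (fun k hk => div_nonneg (sq_nonneg _) (sub_pos.2 (hW k hk)).le) fun k hk => ?_
  rw [mul_div_cancel₀ _ (sub_pos.2 (hW k hk)).ne']

/-- `hW_eigen` is the summed form of `L W = μ W` for the Laplacian `L` of the path on `n` vertices.
After weighting Cauchy–Schwarz by the increments of `W` and swapping sums, the gap at `k` collects
the weight `-n ∑_{i ≤ k} W i`, which the eigen-equation turns into `n (W (k+1) - W k) / μ`. -/
theorem mul_sum_sum_sq_sub_le_of_eigenvector {n : ℕ} {W : ℕ → ℝ} {μ : ℝ} (hμ : 0 ≤ μ)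
    (hW_mono : ∀ k < n - 1, W k < W (k + 1)) (hW_sum : ∑ i ∈ range n, W i = 0)
    (hW_eigen : ∀ k < n - 1, μ * ∑ i ∈ range (k + 1), W i = -(W (k + 1) - W k)) (y : ℕ → ℝ) :
    μ * ∑ j ∈ range n, ∑ i ∈ range j, (y j - y i) ^ 2 ≤
      n * ∑ k ∈ range (n - 1), (y (k + 1) - y k) ^ 2 := by
  set q : ℕ → ℝ := fun k => (y (k + 1) - y k) ^ 2 / (W (k + 1) - W k)
  have hcs : ∀ j ∈ range n, ∀ i ∈ range j,
      (y j - y i) ^ 2 ≤ ∑ k ∈ Ico i j, (W j - W i) * q k := fun j hj i hi => by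
    rw [← mul_sum]
    refine sq_sub_le_mul_sum_sq_div (mem_range.1 hi).le fun k hk => hW_mono k ?_
    simp only [mem_range, mem_Ico] at hj hk
    omega
  calc μ * ∑ j ∈ range n, ∑ i ∈ range j, (y j - y i) ^ 2
      ≤ μ * ∑ j ∈ range n, ∑ i ∈ range j, ∑ k ∈ Ico i j, (W j - W i) * q k := by
        gcongr with j hj i hi
        exact hcs j hj i hi
    _ = ∑ k ∈ range (n - 1),
          q k * (μ * ∑ j ∈ Ico (k + 1) n, ∑ i ∈ range (k + 1), (W j - W i)) := by
        rw [sum_range_sum_range_sum_Ico_comm, mul_sum]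
        refine sum_congr rfl fun k _ => ?_
        simp only [← sum_mul]
        ring
    _ = n * ∑ k ∈ range (n - 1), (y (k + 1) - y k) ^ 2 := by
        rw [mul_sum]
        refine sum_congr rfl fun k hk => ?_
        have hk := mem_range.1 hk
        rw [sum_Ico_sum_range_sub_of_sum_eq_zero hW_sum (by omega)]
        have hq : q k * (W (k + 1) - W k) = (y (k + 1) - y k) ^ 2 :=
          div_mul_cancel₀ _ (sub_pos.2 (hW_mono k hk)).ne'
        linear_combination (-(n : ℝ) * q k) * hW_eigen k hk + (n : ℝ) * hq

theorem two_mul_sin_mul_sum_range_cos (θ : ℝ) (m : ℕ) :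
    2 * sin θ * ∑ i ∈ range m, cos ((2 * i + 1) * θ) = sin (2 * m * θ) := by
  induction m with
  | zero => simp
  | succ m ih =>
    rw [sum_range_succ, mul_add, ih]
    push_cast
    rw [show 2 * (m + 1) * θ = (2 * m + 1) * θ + θ by ring,
      show 2 * m * θ = (2 * m + 1) * θ - θ by ring, sin_add, sin_sub]
    ring

theorem cos_sub_cos_odd_mul (θ : ℝ) (k : ℕ) :
    cos ((2 * k + 1) * θ) - cos ((2 * (k + 1) + 1) * θ) = 2 * sin θ * sin (2 * (k + 1) * θ) := by
  rw [show (2 * k + 1) * θ = 2 * (k + 1) * θ - θ by ring,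
    show (2 * (k + 1) + 1) * θ = 2 * (k + 1) * θ + θ by ring, cos_sub, cos_add]
  ring

theorem two_mul_one_sub_cos_mul_sum_sq_le (n : ℕ) (y : ℕ → ℝ) (hy : ∑ i ∈ range n, y i = 0) :
    2 * (1 - cos (π / n)) * ∑ i ∈ range n, y i ^ 2 ≤
      ∑ k ∈ range (n - 1), (y (k + 1) - y k) ^ 2 := by
  rcases Nat.eq_zero_or_pos n with rfl | hn
  · simp
  have hn' : (0 : ℝ) < n := Nat.cast_pos.2 hn
  set θ := π / (2 * n)
  have hθ : 0 < θ := by positivity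
  have hnθ : 2 * n * θ = π := by
    simp only [θ]
    field_simp
  have hsin : 0 < sin θ := by
    have hn1 : (1 : ℝ) ≤ n := Nat.one_le_cast.2 hn
    exact sin_pos_of_pos_of_lt_pi hθ (by rw [← hnθ]; nlinarith)
  have hμ : 2 * (1 - cos (π / n)) = 4 * sin θ ^ 2 := by
    rw [show π / n = 2 * θ by rw [← hnθ]; field_simp, cos_two_mul, cos_sq']
    ring
  -- the Fiedler vector of the path on `n` vertices, with eigenvalue `4 sin θ ^ 2`
  set W : ℕ → ℝ := fun m => -cos ((2 * m + 1) * θ)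
  have hΔW (k : ℕ) : W (k + 1) - W k = 2 * sin θ * sin (2 * (k + 1) * θ) := by
    simp only [W]
    push_cast
    rw [← cos_sub_cos_odd_mul]
    ring
  have hS (m : ℕ) : 2 * sin θ * ∑ i ∈ range m, W i = -sin (2 * m * θ) := by
    simp only [W, sum_neg_distrib, mul_neg, two_mul_sin_mul_sum_range_cos]
  have hW_mono : ∀ k < n - 1, W k < W (k + 1) := fun k hk => by
    have hk' : (k : ℝ) + 1 < n := by exact_mod_cast (by omega : k + 1 < n)
    rw [← sub_pos, hΔW]
    refine mul_pos (by positivity) (sin_pos_of_pos_of_lt_pi (by positivity) ?_)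
    calc 2 * (k + 1) * θ < 2 * n * θ := by gcongr
      _ = π := hnθ
  have hW_sum : ∑ i ∈ range n, W i = 0 := by
    have := hS n
    rw [hnθ, sin_pi, neg_zero] at this
    exact (mul_eq_zero.1 this).resolve_left (by positivity)
  have hW_eigen : ∀ k < n - 1, 4 * sin θ ^ 2 * ∑ i ∈ range (k + 1), W i = -(W (k + 1) - W k) :=
    fun k _ => by
      have := hS (k + 1)
      push_cast at this
      linear_combination (2 * sin θ) * this + hΔW k
  have key := mul_sum_sum_sq_sub_le_of_eigenvector (by positivity) hW_mono hW_sum hW_eigen y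
  rw [sum_range_sum_range_sq_sub, hy] at key
  rw [hμ]
  refine le_of_mul_le_mul_left ?_ hn'
  calc _ = 4 * sin θ ^ 2 * (n * ∑ i ∈ range n, y i ^ 2 - 0 ^ 2) := by ring
    _ ≤ _ := key

theorem sum_Ico_sq_sub_le_sq_sub {Y : ℕ → ℝ} (hY : Monotone Y) {a b : ℕ} (hab : a ≤ b) :
    ∑ k ∈ Ico a b, (Y (k + 1) - Y k) ^ 2 ≤ (Y b - Y a) ^ 2 := by
  rw [← sum_Ico_sub Y hab]
  exact sum_sq_le_sq_sum_of_nonneg fun k _ => sub_nonneg.2 (hY k.le_succ)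

theorem sum_range_ite_xor_le_sq_sub {Y : ℕ → ℝ} (hY : Monotone Y) (a b m : ℕ) :
    ∑ k ∈ range m, (if Xor (a ≤ k) (b ≤ k) then (Y (k + 1) - Y k) ^ 2 else 0) ≤
      (Y a - Y b) ^ 2 := by
  wlog hab : a ≤ b generalizing a b
  · rw [← neg_sub, neg_sq]
    simpa only [_root_.xor_comm] using this b a (le_of_not_ge hab)
  rw [← sum_filter]
  calc _ ≤ ∑ k ∈ Ico a b, (Y (k + 1) - Y k) ^ 2 := by
        refine sum_le_sum_of_subset_of_nonneg (fun k hk => ?_) fun _ _ _ => sq_nonneg _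
        have hk := (mem_filter.1 hk).2
        simp only [Xor] at hk
        exact mem_Ico.2 (by omega)
    _ ≤ (Y b - Y a) ^ 2 := sum_Ico_sq_sub_le_sq_sub hY hab
    _ = (Y a - Y b) ^ 2 := by ring

theorem exists_equiv_fin_monotone {V α : Type*} [Fintype V] [Nonempty V] [LinearOrder α]
    (x : V → α) :
    ∃ (e : V ≃ Fin (Fintype.card V)) (Y : ℕ → α), Monotone Y ∧ ∀ v, x v = Y (e v) := by
  set n := Fintype.card V
  have hn : 0 < n := Fintype.card_pos
  set p : Fin n ≃ V :=
    (Tuple.sort (x ∘ (Fintype.equivFin V).symm)).trans (Fintype.equivFin V).symm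
  have hp : Monotone (x ∘ p) := Tuple.monotone_sort (x ∘ (Fintype.equivFin V).symm)
  refine ⟨p.symm, fun k => x (p ⟨min k (n - 1), by omega⟩), fun k l hkl => ?_, fun v => ?_⟩
  · exact hp (show (⟨min k (n - 1), _⟩ : Fin n) ≤ ⟨min l (n - 1), _⟩ from min_le_min_right _ hkl)
  · have hv : min (p.symm v : ℕ) (n - 1) = p.symm v := min_eq_left (by omega)
    simp only [hv, Fin.eta, Equiv.apply_symm_apply]

namespace SimpleGraph

variable {V : Type*} [Fintype V] (G : SimpleGraph V)

theorem edgeConnectivity_le_card {F : Finset (Sym2 V)} (hF : ↑F ⊆ G.edgeSet)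
    (hdisc : ¬(G.deleteEdges ↑F).Connected) : G.edgeConnectivity ≤ #F :=
  Nat.sInf_le ⟨F, hF, hdisc, rfl⟩

variable [DecidableEq V] [DecidableRel G.Adj]

theorem edgeConnectivity_le_card_adj_filter (P : V → Prop) [DecidablePred P] {u v : V}
    (hu : P u) (hv : ¬P v) :
    G.edgeConnectivity ≤ #{p : V × V | G.Adj p.1 p.2 ∧ P p.1 ∧ ¬P p.2} := by
  set C : Finset (V × V) := {p | G.Adj p.1 p.2 ∧ P p.1 ∧ ¬P p.2}
  refine (G.edgeConnectivity_le_card (F := C.image fun p => s(p.1, p.2)) ?_ ?_).trans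
    card_image_le
  · intro e he
    obtain ⟨p, hp, rfl⟩ := mem_image.1 (mem_coe.1 he)
    exact (mem_filter.1 hp).2.1
  · intro hconn
    obtain ⟨w⟩ := hconn.preconnected u v
    obtain ⟨d, -, hd₁, hd₂⟩ := w.exists_boundary_dart {x | P x} hu hv
    have hd := deleteEdges_adj.1 d.adj
    exact hd.2 (mem_image_of_mem (fun p : V × V => s(p.1, p.2))
      (mem_filter.2 ⟨mem_univ _, hd.1, hd₁, hd₂⟩))

theorem two_mul_edgeConnectivity_le_card_adj_xor (P : V → Prop) [DecidablePred P] {u v : V}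
    (hu : P u) (hv : ¬P v) :
    2 * G.edgeConnectivity ≤ #{p : V × V | G.Adj p.1 p.2 ∧ Xor (P p.1) (P p.2)} := by
  have h₁ := G.edgeConnectivity_le_card_adj_filter P hu hv
  have h₂ := G.edgeConnectivity_le_card_adj_filter (¬P ·) hv (not_not.2 hu)
  have hsplit : #{p : V × V | G.Adj p.1 p.2 ∧ Xor (P p.1) (P p.2)} =
      #{p : V × V | G.Adj p.1 p.2 ∧ P p.1 ∧ ¬P p.2} +
        #{p : V × V | G.Adj p.1 p.2 ∧ ¬P p.1 ∧ ¬¬P p.2} := by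
    rw [← card_union_of_disjoint (disjoint_filter.2 fun p _ h₁ h₂ => h₂.2.1 h₁.2.1)]
    congr 1
    ext p
    simp only [mem_filter, mem_univ, true_and, mem_union]
    unfold Xor
    tauto
  omega

theorem edgeConnectivity_mul_sum_sq_le_dotProduct_lapMatrix {n : ℕ} (e : V ≃ Fin n) {Y : ℕ → ℝ}
    (hY : Monotone Y) :
    G.edgeConnectivity * ∑ k ∈ range (n - 1), (Y (k + 1) - Y k) ^ 2 ≤
      (fun v => Y (e v)) ⬝ᵥ (G.lapMatrix ℝ *ᵥ fun v => Y (e v)) := by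
  set D : ℕ → ℝ := fun k => (Y (k + 1) - Y k) ^ 2
  set cross : ℕ → V × V → Prop :=
    fun k p => G.Adj p.1 p.2 ∧ Xor ((e p.1 : ℕ) ≤ k) ((e p.2 : ℕ) ≤ k)
  have hcut : ∀ k ∈ range (n - 1), 2 * G.edgeConnectivity ≤ #{p | cross k p} := fun k hk => by
    have hk := mem_range.1 hk
    exact G.two_mul_edgeConnectivity_le_card_adj_xor (fun v => (e v : ℕ) ≤ k)
      (u := e.symm ⟨0, by omega⟩) (v := e.symm ⟨n - 1, by omega⟩) (by simp) (by simp; omega)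
  have hcount (k : ℕ) :
      ∑ u, ∑ v, (if cross k (u, v) then D k else 0) = #{p | cross k p} * D k := by
    rw [← Fintype.sum_prod_type', ← sum_filter, sum_const, nsmul_eq_mul]
  have hpoint (u v : V) : ∑ k ∈ range (n - 1), (if cross k (u, v) then D k else 0) ≤
      if G.Adj u v then (Y (e u) - Y (e v)) ^ 2 else 0 := by
    split_ifs with huv
    · simpa [cross, huv] using sum_range_ite_xor_le_sq_sub hY (e u) (e v) (n - 1)
    · simp [cross, huv]
  rw [← toLinearMap₂'_apply', lapMatrix_toLinearMap₂']
  calc (G.edgeConnectivity : ℝ) * ∑ k ∈ range (n - 1), D k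
      = (∑ k ∈ range (n - 1), ((2 * G.edgeConnectivity : ℕ) : ℝ) * D k) / 2 := by
        rw [← mul_sum]
        push_cast
        ring
    _ ≤ (∑ k ∈ range (n - 1), (#{p | cross k p} : ℝ) * D k) / 2 := by
        gcongr with k hk
        exact_mod_cast hcut k hk
    _ = (∑ u, ∑ v, ∑ k ∈ range (n - 1), if cross k (u, v) then D k else 0) / 2 := by
        simp only [← hcount]
        rw [sum_comm]
        congr 1
        exact sum_congr rfl fun u _ => sum_comm
    _ ≤ _ := by
        gcongr with u _ v _
        exact hpoint u v

theorem two_mul_edgeConnectivity_mul_one_sub_cos_mul_dotProduct_le [Nonempty V] (x : V → ℝ)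
    (hx : ∑ v, x v = 0) :
    2 * G.edgeConnectivity * (1 - cos (π / Fintype.card V)) * (x ⬝ᵥ x) ≤
      x ⬝ᵥ (G.lapMatrix ℝ *ᵥ x) := by
  obtain ⟨e, Y, hY, hxY⟩ := exists_equiv_fin_monotone x
  obtain rfl : x = fun v => Y (e v) := funext hxY
  have hsum (f : ℝ → ℝ) : ∑ i ∈ range (Fintype.card V), f (Y i) = ∑ v, f (Y (e v)) := by
    rw [← Fin.sum_univ_eq_sum_range, e.sum_comp fun i => f (Y i)]
  have hwirt := two_mul_one_sub_cos_mul_sum_sq_le _ Y ((hsum id).trans hx)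
  calc 2 * G.edgeConnectivity * (1 - cos (π / Fintype.card V)) * ∑ v, Y (e v) * Y (e v)
      = G.edgeConnectivity * (2 * (1 - cos (π / Fintype.card V)) *
          ∑ i ∈ range (Fintype.card V), Y i ^ 2) := by
        rw [hsum (· ^ 2)]
        simp only [sq]
        ring
    _ ≤ G.edgeConnectivity * ∑ k ∈ range (Fintype.card V - 1), (Y (k + 1) - Y k) ^ 2 := by
        gcongr
    _ ≤ _ := G.edgeConnectivity_mul_sum_sq_le_dotProduct_lapMatrix e hY

theorem le_lambdaOne [Nontrivial V] {c : ℝ}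
    (h : ∀ x : V → ℝ, ∑ v, x v = 0 → c * (x ⬝ᵥ x) ≤ x ⬝ᵥ (G.lapMatrix ℝ *ᵥ x)) :
    c ≤ G.lambdaOne := by
  obtain ⟨a, b, hab⟩ := exists_pair_ne V
  have hne : (Pi.single a 1 - Pi.single b 1 : V → ℝ) ≠ 0 := fun h => by
    simpa [hab] using congrFun h a
  refine le_csInf ⟨_, _, hne, by simp [sum_sub_distrib], rfl⟩ ?_
  rintro _ ⟨x, hx0, hxs, rfl⟩
  have hpos : 0 < x ⬝ᵥ x := by simpa using dotProduct_self_star_pos_iff.2 hx0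
  rw [le_div_iff₀ hpos]
  exact h x hxs

end SimpleGraph

theorem lambdaOne_ge_edgeConnectivity_general {V : Type*} [Fintype V] [DecidableEq V]
    (G : SimpleGraph V) [DecidableRel G.Adj]
    (hV : 2 ≤ Fintype.card V) :
    G.lambdaOne ≥ 2 * (G.edgeConnectivity : ℝ) *
      (1 - Real.cos (Real.pi / Fintype.card V)) := by
  have : Nontrivial V := Fintype.one_lt_card_iff_nontrivial.1 hV
  exact G.le_lambdaOne fun x hx =>
    G.two_mul_edgeConnectivity_mul_one_sub_cos_mul_dotProduct_le x hx

/-- **Fiedler, 1973** (lower bound): for a connected graph on `V ≥ 2` vertices,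
`λ₁(G) ≥ 2 e(G) (1 - cos (π / V))`. -/
theorem lambdaOne_ge_edgeConnectivity {V : Type*} [Fintype V] [DecidableEq V]
    (G : SimpleGraph V) [DecidableRel G.Adj]
    (hconn : G.Connected) (hV : 2 ≤ Fintype.card V) :
    G.lambdaOne ≥ 2 * (G.edgeConnectivity : ℝ) *
      (1 - Real.cos (Real.pi / Fintype.card V)) :=
  lambdaOne_ge_edgeConnectivity_general G hV
end

section
/- Let G be a connected finite simple graph on at least 2 vertices, with maximal vertex degree deg_max(G) ≥ 1, let λ₁(G) denote the second-smallest eigenvalue of its Laplacian matrix, and let h(G) denote its Cheeger constant. Then λ₁(G) ≥ h(G)²/(2·deg_max(G)). -/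
open Matrix Finset

open Classical in
/-- The set `∂S` of edges of `G` having exactly one endpoint in the vertex set `S`. -/
noncomputable def SimpleGraph.edgeBoundary {V : Type*} [Fintype V] [DecidableEq V]
    (G : SimpleGraph V) [DecidableRel G.Adj] (S : Finset V) : Finset (Sym2 V) :=
  G.edgeFinset.filter (fun e => ∃ u v, e = s(u, v) ∧ u ∈ S ∧ v ∉ S)

/-- The Cheeger constant of a finite simple graph: the minimum of
`|∂S| / min {|S|, |Sᶜ|}` over all nonempty proper vertex subsets `S`. -/
noncomputable def SimpleGraph.cheegerConstant {V : Type*} [Fintype V] [DecidableEq V]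
    (G : SimpleGraph V) [DecidableRel G.Adj] : ℝ :=
  sInf { r : ℝ | ∃ S : Finset V, S.Nonempty ∧ S ≠ Finset.univ ∧
    r = (G.edgeBoundary S).card / (min S.card Sᶜ.card : ℝ) }

/-!
Shift a vector `x ⊥ 𝟙` by a median `c` of its values: this keeps the Laplacian energy and
does not decrease `∑ x²`. The positive and negative parts `y` of `x - c` are then supported on at
most half of the vertices, so every level set of `y²` has at least `h` times its size in boundary
edges. Peeling off these level sets one at a time (a discrete co-area formula) gives
`h ∑ y² ≤ ∑_{u→v} (y_u² - y_v²)⁺`, and Cauchy–Schwarz with `(y_u + y_v)² ≤ 2 (y_u² + y_v²)` and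
`deg ≤ deg_max` turns this into `h² ∑ y² ≤ deg_max ∑_{u→v} (y_u - y_v)²`.
-/

theorem Fintype.exists_median {ι α : Type*} [Fintype ι] [Nonempty ι] [LinearOrder α] (x : ι → α) :
    ∃ c, 2 * #{i | c < x i} ≤ Fintype.card ι ∧ 2 * #{i | x i < c} ≤ Fintype.card ι := by
  classical
  set A : Finset ι := {i | 2 * #{j | x i < x j} ≤ Fintype.card ι}
  have hA : A.Nonempty := by
    obtain ⟨i, hi⟩ := Finite.exists_max x
    exact ⟨i, by simp [A, (hi _).not_gt]⟩
  -- `c` is the least value with at most half the points strictly above it; then the largest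
  -- value below `c` has more than half strictly above it, i.e. `#{x ≥ c} > n / 2`.
  obtain ⟨i₀, hi₀, hmin⟩ := A.exists_min_image x hA
  refine ⟨x i₀, (mem_filter.1 hi₀).2, ?_⟩
  by_contra! hlow
  obtain ⟨j, hj, hmax⟩ := exists_max_image {j | x j < x i₀} x <| by
    by_contra h
    simp [not_nonempty_iff_eq_empty.1 h] at hlow
  replace hj : x j < x i₀ := (mem_filter.1 hj).2
  have habove : ({k | x j < x k} : Finset ι) = ({k | x i₀ ≤ x k} : Finset ι) := by
    ext k
    simp only [mem_filter, mem_univ, true_and]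
    exact ⟨fun h => not_lt.1 fun h' => (hmax k (by simpa using h')).not_gt h,
      fun h => hj.trans_le h⟩
  have hjA : j ∉ A := fun h => (hmin j h).not_gt hj
  have hsplit := card_filter_add_card_filter_not (s := univ) (fun k => x k < x i₀)
  simp only [not_lt, card_univ] at hsplit
  simp only [A, mem_filter, mem_univ, true_and, not_le, habove] at hjA
  omega

theorem Fintype.sum_eq_mul_card_add_sum_posPart_sub {ι : Type*} [Fintype ι] [DecidableEq ι]
    (w : ι → ℝ) (S : Finset ι) (m : ℝ) (hcut : ∀ i, min (w i) m = if i ∈ S then m else 0) :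
    ∑ i, w i = m * #S + ∑ i, (w i - m)⁺ := by
  have hdecomp : ∀ i, w i = min (w i) m + (w i - m)⁺ := fun i => by
    rcases le_total (w i) m with h | h <;> simp [h]
  rw [Finset.sum_congr rfl fun i _ => hdecomp i, sum_add_distrib,
    Finset.sum_congr rfl fun i _ => hcut i, sum_ite_mem, sum_const, nsmul_eq_mul,
    mul_comm]

theorem posPart_sub_eq_posPart_min_sub_min_add (a b m : ℝ) :
    (a - b)⁺ = (min a m - min b m)⁺ + ((a - m)⁺ - (b - m)⁺)⁺ := by
  simp only [posPart_def]
  rcases le_total a b with h | h <;> rcases le_total a m with ha | ha <;>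
    rcases le_total b m with hb | hb <;> simp [h, ha, hb] <;> linarith

theorem sq_eq_posPart_sq_add_negPart_sq (a : ℝ) : a ^ 2 = a⁺ ^ 2 + a⁻ ^ 2 := by
  rcases le_total a 0 with h | h <;> simp [h]

theorem sq_posPart_sub_add_sq_negPart_sub_le (a b : ℝ) :
    (a⁺ - b⁺) ^ 2 + (a⁻ - b⁻) ^ 2 ≤ (a - b) ^ 2 := by
  rcases le_total a 0 with ha | ha <;> rcases le_total b 0 with hb | hb <;> simp [ha, hb] <;>
    nlinarith

namespace SimpleGraph

variable {V : Type*} [Fintype V] (G : SimpleGraph V) [DecidableRel G.Adj]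

theorem sum_darts_eq_sum_sum_adj {M : Type*} [AddCommMonoid M] (f : V → V → M) :
    ∑ d : G.Dart, f d.fst d.snd = ∑ u, ∑ v, if G.Adj u v then f u v else 0 := by
  let e : G.Dart ≃ {p : V × V // G.Adj p.1 p.2} :=
    { toFun := fun d => ⟨d.toProd, d.adj⟩
      invFun := fun p => ⟨p.1, p.2⟩ }
  rw [← Fintype.sum_prod_type', ← sum_filter, sum_subtype _ fun _ => mem_filter_univ _]
  exact Fintype.sum_equiv e _ _ fun _ => rfl

theorem sum_darts_symm {M : Type*} [AddCommMonoid M] (f : G.Dart → M) :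
    ∑ d : G.Dart, f d.symm = ∑ d, f d :=
  Equiv.sum_comp (Dart.symm_involutive.toPerm _) f

theorem sum_darts_abs_sub (f : V → ℝ) :
    ∑ d : G.Dart, |f d.fst - f d.snd| = 2 * ∑ d : G.Dart, (f d.fst - f d.snd)⁺ := by
  have hneg : ∑ d : G.Dart, (f d.fst - f d.snd)⁻ = ∑ d : G.Dart, (f d.fst - f d.snd)⁺ := by
    simp only [← posPart_neg, neg_sub]
    exact G.sum_darts_symm fun d => (f d.fst - f d.snd)⁺
  rw [← sum_congr rfl fun d _ => posPart_add_negPart _, sum_add_distrib, hneg, two_mul]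

variable [DecidableEq V]

theorem sum_darts_fst {M : Type*} [AddCommMonoid M] (f : V → M) :
    ∑ d : G.Dart, f d.fst = ∑ v, G.degree v • f v := by
  rw [← sum_fiberwise univ (fun d : G.Dart => d.fst)]
  refine sum_congr rfl fun v _ => ?_
  rw [sum_congr rfl fun d hd => congrArg f (mem_filter.1 hd).2, sum_const,
    dart_fst_fiber_card_eq_degree]

theorem sum_darts_add_sq_le (y : V → ℝ) :
    ∑ d : G.Dart, (y d.fst + y d.snd) ^ 2 ≤ 4 * G.maxDegree * ∑ v, y v ^ 2 := by
  have hsymm : ∑ d : G.Dart, y d.snd ^ 2 = ∑ d : G.Dart, y d.fst ^ 2 :=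
    G.sum_darts_symm fun d => y d.fst ^ 2
  calc ∑ d : G.Dart, (y d.fst + y d.snd) ^ 2
      ≤ ∑ d : G.Dart, 2 * (y d.fst ^ 2 + y d.snd ^ 2) :=
        sum_le_sum fun d _ => by nlinarith [sq_nonneg (y d.fst - y d.snd)]
    _ = 4 * ∑ v, G.degree v * y v ^ 2 := by
        rw [← mul_sum, sum_add_distrib, hsymm, G.sum_darts_fst fun v => y v ^ 2]
        simp only [nsmul_eq_mul]
        ring
    _ ≤ 4 * ∑ v, (G.maxDegree : ℝ) * y v ^ 2 := by
        gcongr with v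
        exact_mod_cast G.degree_le_maxDegree v
    _ = 4 * G.maxDegree * ∑ v, y v ^ 2 := by rw [← mul_sum, mul_assoc]

theorem dotProduct_lapMatrix_mulVec (x : V → ℝ) :
    x ⬝ᵥ (G.lapMatrix ℝ *ᵥ x) = (∑ d : G.Dart, (x d.fst - x d.snd) ^ 2) / 2 := by
  rw [← toLinearMap₂'_apply', lapMatrix_toLinearMap₂',
    sum_darts_eq_sum_sum_adj G fun u v => (x u - x v) ^ 2]

theorem card_edgeBoundary_eq_card_darts (S : Finset V) :
    #(G.edgeBoundary S) = #{d : G.Dart | d.fst ∈ S ∧ d.snd ∉ S} := by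
  symm
  refine card_bij (fun d _ => d.edge) ?_ ?_ ?_
  · intro d hd
    simp only [edgeBoundary, mem_filter, mem_edgeFinset, mem_univ, true_and] at hd ⊢
    exact ⟨d.edge_mem, d.fst, d.snd, rfl, hd⟩
  · intro d₁ hd₁ d₂ hd₂ h
    simp only [mem_filter, mem_univ, true_and] at hd₁ hd₂
    refine ((dart_edge_eq_iff d₁ d₂).1 h).resolve_right fun h' => ?_
    subst h'
    exact hd₂.2 hd₁.1
  · intro e he
    simp only [edgeBoundary, mem_filter, mem_edgeFinset] at he
    obtain ⟨he, u, v, rfl, hu, hv⟩ := he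
    exact ⟨⟨(u, v), he⟩, by simp [hu, hv], rfl⟩

theorem sum_darts_posPart_sub_eq_mul_card_edgeBoundary_add (w : V → ℝ) (S : Finset V) {m : ℝ}
    (hm : 0 ≤ m) (hcut : ∀ v, min (w v) m = if v ∈ S then m else 0) :
    ∑ d : G.Dart, (w d.fst - w d.snd)⁺
      = m * #(G.edgeBoundary S) + ∑ d : G.Dart, ((w d.fst - m)⁺ - (w d.snd - m)⁺)⁺ := by
  have hcross : ∀ u v, (min (w u) m - min (w v) m)⁺ = if u ∈ S ∧ v ∉ S then m else 0 := by
    intro u v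
    rw [hcut, hcut]
    by_cases hu : u ∈ S <;> by_cases hv : v ∈ S <;> simp [hu, hv, hm]
  rw [sum_congr rfl fun d _ => posPart_sub_eq_posPart_min_sub_min_add _ _ m, sum_add_distrib,
    sum_congr rfl fun d _ => hcross d.fst d.snd, ← sum_filter, sum_const,
    card_edgeBoundary_eq_card_darts, nsmul_eq_mul, mul_comm]

theorem cheegerConstant_nonneg : 0 ≤ G.cheegerConstant :=
  Real.sInf_nonneg <| by
    rintro r ⟨S, -, -, rfl⟩
    positivity

theorem cheegerConstant_mul_card_le {S : Finset V} (hS : S.Nonempty)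
    (hS' : 2 * #S ≤ Fintype.card V) :
    G.cheegerConstant * #S ≤ #(G.edgeBoundary S) := by
  have hcard : 0 < #S := hS.card_pos
  have hmin : min #S #Sᶜ = #S := by rw [card_compl]; omega
  have hle : G.cheegerConstant ≤ #(G.edgeBoundary S) / (#S : ℝ) := by
    refine csInf_le ⟨0, ?_⟩ ⟨S, hS, ?_, by norm_cast; rw [hmin]⟩
    · rintro r ⟨T, -, -, rfl⟩
      positivity
    · rintro rfl
      rw [card_univ] at hS' hcard
      omega
  rwa [le_div_iff₀ (by exact_mod_cast hcard)] at hle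

theorem cheegerConstant_mul_sum_le_sum_darts_posPart (w : V → ℝ) (hw : 0 ≤ w)
    (hsupp : 2 * #{v | 0 < w v} ≤ Fintype.card V) :
    G.cheegerConstant * ∑ v, w v ≤ ∑ d : G.Dart, (w d.fst - w d.snd)⁺ := by
  induction hn : #{v | 0 < w v} using Nat.strong_induction_on generalizing w with
  | _ n ih =>
  set S : Finset V := {v | 0 < w v}
  rcases S.eq_empty_or_nonempty with hS | hS
  · have hw0 : ∀ v, w v = 0 := fun v => le_antisymm
      (not_lt.1 fun h => eq_empty_iff_forall_notMem.1 hS v (mem_filter_univ v |>.2 h)) (hw v)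
    simp only [hw0, sum_const_zero, mul_zero, sub_self, posPart_zero, le_refl]
  -- Peel off the bottom layer `m • 𝟙_S` of `w`, `m` its least positive value.
  obtain ⟨v₀, hv₀, hmin⟩ := S.exists_min_image w hS
  set m := w v₀
  have hm : 0 < m := (mem_filter.1 hv₀).2
  have hcut : ∀ v, min (w v) m = if v ∈ S then m else 0 := by
    intro v
    by_cases hv : v ∈ S
    · simp [hv, hmin v hv]
    · have : w v = 0 := le_antisymm (by simpa [S] using hv) (hw v)
      simp [hv, this, hm.le]
  have hsupp' : ({v | 0 < (w v - m)⁺} : Finset V) ⊂ S := by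
    refine ssubset_iff_of_subset (fun v hv => ?_) |>.2 ⟨v₀, hv₀, by simp [m]⟩
    simp only [S, mem_filter_univ, posPart_pos_iff, sub_pos] at hv ⊢
    exact hm.trans hv
  have hrest := ih _ (hn ▸ card_lt_card hsupp') (fun v => (w v - m)⁺) (fun v => posPart_nonneg _)
    ((Nat.mul_le_mul_left 2 (card_le_card hsupp'.subset)).trans hsupp) rfl
  rw [Fintype.sum_eq_mul_card_add_sum_posPart_sub w S m hcut,
    G.sum_darts_posPart_sub_eq_mul_card_edgeBoundary_add w S hm.le hcut, mul_add]
  linarith [mul_le_mul_of_nonneg_left (G.cheegerConstant_mul_card_le hS hsupp) hm.le]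

theorem cheegerConstant_sq_mul_sum_sq_le (y : V → ℝ) (hy : 0 ≤ y)
    (hsupp : 2 * #{v | 0 < y v} ≤ Fintype.card V) :
    G.cheegerConstant ^ 2 * ∑ v, y v ^ 2 ≤ G.maxDegree * ∑ d : G.Dart, (y d.fst - y d.snd) ^ 2 := by
  set h := G.cheegerConstant
  set P := ∑ v, y v ^ 2
  set Q := ∑ d : G.Dart, (y d.fst - y d.snd) ^ 2
  set B := ∑ d : G.Dart, (y d.fst ^ 2 - y d.snd ^ 2)⁺
  have hcoarea : h * P ≤ B := by
    refine G.cheegerConstant_mul_sum_le_sum_darts_posPart (fun v => y v ^ 2)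
      (fun v => sq_nonneg _) ?_
    rwa [filter_congr fun v _ =>
      (sq_pos_iff.trans (hy v).lt_iff_ne'.symm : 0 < y v ^ 2 ↔ 0 < y v)]
  have hCS : (2 * B) ^ 2 ≤ Q * (4 * G.maxDegree * P) := by
    rw [← G.sum_darts_abs_sub fun v => y v ^ 2]
    calc (∑ d : G.Dart, |y d.fst ^ 2 - y d.snd ^ 2|) ^ 2
        = (∑ d : G.Dart, |y d.fst - y d.snd| * (y d.fst + y d.snd)) ^ 2 := by
          congr 1
          refine sum_congr rfl fun d _ => ?_
          rw [sq_sub_sq, abs_mul, abs_of_nonneg (add_nonneg (hy _) (hy _)), mul_comm]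
      _ ≤ Q * ∑ d : G.Dart, (y d.fst + y d.snd) ^ 2 := by
          simpa only [sq_abs] using sum_mul_sq_le_sq_mul_sq univ
            (fun d : G.Dart => |y d.fst - y d.snd|) fun d => y d.fst + y d.snd
      _ ≤ Q * (4 * G.maxDegree * P) :=
          mul_le_mul_of_nonneg_left (G.sum_darts_add_sq_le y) (sum_nonneg fun _ _ => sq_nonneg _)
  have hP : 0 ≤ P := sum_nonneg fun _ _ => sq_nonneg _
  have hsq : h ^ 2 * P * P ≤ G.maxDegree * Q * P := by
    nlinarith [pow_le_pow_left₀ (mul_nonneg G.cheegerConstant_nonneg hP) hcoarea 2]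
  rcases hP.eq_or_lt with hP0 | hPpos
  · rw [← hP0, mul_zero]
    positivity
  · exact le_of_mul_le_mul_right hsq hPpos

theorem cheegerConstant_sq_mul_sum_sq_le_of_sum_eq_zero [Nonempty V] (x : V → ℝ)
    (hx : ∑ v, x v = 0) :
    G.cheegerConstant ^ 2 * ∑ v, x v ^ 2 ≤ G.maxDegree * ∑ d : G.Dart, (x d.fst - x d.snd) ^ 2 := by
  obtain ⟨c, hc₁, hc₂⟩ := Fintype.exists_median x
  set g : V → ℝ := fun v => x v - c
  have hg : ∑ v, x v ^ 2 ≤ ∑ v, g v ^ 2 := by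
    have : ∑ v, g v ^ 2 = ∑ v, x v ^ 2 + Fintype.card V * c ^ 2 := by
      simp only [g, sub_sq, sum_add_distrib, sum_sub_distrib, ← sum_mul, ← mul_sum, hx,
        sum_const, card_univ, nsmul_eq_mul]
      ring
    rw [this]
    exact le_add_of_nonneg_right (by positivity)
  have hpos : 2 * #{v | 0 < g⁺ v} ≤ Fintype.card V := by simpa [g] using hc₁
  have hneg : 2 * #{v | 0 < g⁻ v} ≤ Fintype.card V := by simpa [g] using hc₂
  have hdarts : ∑ d : G.Dart, (g⁺ d.fst - g⁺ d.snd) ^ 2 + ∑ d : G.Dart, (g⁻ d.fst - g⁻ d.snd) ^ 2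
      ≤ ∑ d : G.Dart, (x d.fst - x d.snd) ^ 2 := by
    rw [← sum_add_distrib]
    refine sum_le_sum fun d _ => ?_
    simpa [g] using sq_posPart_sub_add_sq_negPart_sub_le (g d.fst) (g d.snd)
  calc G.cheegerConstant ^ 2 * ∑ v, x v ^ 2
      ≤ G.cheegerConstant ^ 2 * ∑ v, g v ^ 2 := by gcongr
    _ = G.cheegerConstant ^ 2 * ∑ v, g⁺ v ^ 2 + G.cheegerConstant ^ 2 * ∑ v, g⁻ v ^ 2 := by
        rw [← mul_add, ← sum_add_distrib]
        exact congrArg _ (sum_congr rfl fun v _ => sq_eq_posPart_sq_add_negPart_sq (g v))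
    _ ≤ G.maxDegree * ∑ d : G.Dart, (g⁺ d.fst - g⁺ d.snd) ^ 2
          + G.maxDegree * ∑ d : G.Dart, (g⁻ d.fst - g⁻ d.snd) ^ 2 :=
        add_le_add (G.cheegerConstant_sq_mul_sum_sq_le _ (posPart_nonneg g) hpos)
          (G.cheegerConstant_sq_mul_sum_sq_le _ (negPart_nonneg g) hneg)
    _ ≤ G.maxDegree * ∑ d : G.Dart, (x d.fst - x d.snd) ^ 2 := by
        rw [← mul_add]
        gcongr

end SimpleGraph

theorem lambdaOne_ge_cheeger_sq_div_general {V : Type*} [Fintype V] [DecidableEq V]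
    (G : SimpleGraph V) [DecidableRel G.Adj]
    (hV : 2 ≤ Fintype.card V) :
    G.lambdaOne ≥ G.cheegerConstant ^ 2 / (2 * (G.maxDegree : ℝ)) := by
  have : Nonempty V := Fintype.card_pos_iff.1 (by omega)
  obtain ⟨u, v, huv⟩ := Fintype.exists_pair_of_one_lt_card (by omega : 1 < Fintype.card V)
  refine le_csInf ⟨_, Pi.single u 1 - Pi.single v 1, ?_, by simp, rfl⟩ ?_
  · intro h
    simpa [huv] using congrFun h u
  rintro r ⟨x, hx₀, hx, rfl⟩
  have hxx : 0 < x ⬝ᵥ x := by simpa using dotProduct_self_star_pos_iff.2 hx₀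
  rw [le_div_iff₀ hxx, G.dotProduct_lapMatrix_mulVec, div_mul_eq_mul_div]
  refine div_le_of_le_mul₀ (by positivity) (by positivity) ?_
  have := G.cheegerConstant_sq_mul_sum_sq_le_of_sum_eq_zero x hx
  simp only [dotProduct, ← sq]
  linarith

/-- **Dodziuk 1984, Alon–Milman 1985** (lower bound): for a connected graph on at least two
vertices with maximal degree `deg_max(G) ≥ 1`, `λ₁(G) ≥ h(G)² / (2 deg_max(G))`. -/
theorem lambdaOne_ge_cheeger_sq_div {V : Type*} [Fintype V] [DecidableEq V]
    (G : SimpleGraph V) [DecidableRel G.Adj]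
    (hconn : G.Connected) (hV : 2 ≤ Fintype.card V) (hdeg : 1 ≤ G.maxDegree) :
    G.lambdaOne ≥ G.cheegerConstant ^ 2 / (2 * (G.maxDegree : ℝ)) :=
  lambdaOne_ge_cheeger_sq_div_general G hV
end

section
/- Let G be a connected finite simple graph on at least 2 vertices, let λ₁(G) denote the second-smallest eigenvalue of its Laplacian matrix, and let h(G) denote its Cheeger constant. Then λ₁(G) ≤ 2·h(G). -/
/-!
`λ₁` is the infimum of the Rayleigh quotient over vectors orthogonal to the constants, so it
suffices to exhibit, for every nonempty proper `S`, such a vector whose quotient is at most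
`2 |∂S| / min (|S|, |Sᶜ|)`. The vector equal to `|Sᶜ|` on `S` and to `-|S|` on `Sᶜ` works: its
Laplacian form is `(|S| + |Sᶜ|)² |∂S|` and its squared norm is `|S| |Sᶜ| (|S| + |Sᶜ|)`, so its
quotient is `|∂S| (1/|S| + 1/|Sᶜ|)`.
-/

open Matrix Finset

theorem Finset.sum_ite_mem_univ {V M : Type*} [Fintype V] [DecidableEq V] [AddCommMonoid M]
    (S : Finset V) (c d : M) : ∑ v, (if v ∈ S then c else d) = #S • c + #Sᶜ • d := by
  rw [sum_ite, filter_mem_eq_inter, univ_inter, filter_notMem_eq_sdiff, ← compl_eq_univ_sdiff,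
    sum_const, sum_const]

theorem inv_add_inv_le_two_div_min {K : Type*} [Field K] [LinearOrder K] [IsStrictOrderedRing K]
    {a b : K} (ha : 0 < a) (hb : 0 < b) :
    a⁻¹ + b⁻¹ ≤ 2 / min a b := by
  have hmin : 0 < min a b := lt_min ha hb
  have := inv_anti₀ hmin (min_le_left a b)
  have := inv_anti₀ hmin (min_le_right a b)
  rw [div_eq_mul_inv, two_mul]
  linarith

namespace SimpleGraph

variable {V : Type*} [Fintype V] [DecidableEq V] (G : SimpleGraph V) [DecidableRel G.Adj]

theorem card_interedges_compl_eq_card_edgeBoundary (S : Finset V) :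
    #(G.interedges S Sᶜ) = #(G.edgeBoundary S) := by
  refine Finset.card_bij (fun p _ => s(p.1, p.2)) ?_ ?_ ?_
  · rintro ⟨u, v⟩ huv
    rw [mk_mem_interedges_iff, mem_compl] at huv
    simp only [edgeBoundary, mem_filter, mem_edgeFinset, mem_edgeSet]
    exact ⟨huv.2.2, u, v, rfl, huv.1, huv.2.1⟩
  · rintro ⟨u, v⟩ huv ⟨u', v'⟩ hu'v' h
    rw [mk_mem_interedges_iff, mem_compl] at huv hu'v'
    rcases Sym2.eq_iff.mp h with ⟨rfl, rfl⟩ | ⟨rfl, rfl⟩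
    · rfl
    · exact absurd huv.1 hu'v'.2.1
  · intro e he
    simp only [edgeBoundary, mem_filter, mem_edgeFinset] at he
    obtain ⟨hadj, u, v, rfl, hu, hv⟩ := he
    exact ⟨(u, v), by simpa [mk_mem_interedges_iff, hu, hv] using hadj, rfl⟩

theorem dotProduct_lapMatrix_mulVec_ite {R : Type*} [Field R] [CharZero R] (S : Finset V)
    (c d : R) :
    (fun v => if v ∈ S then c else d) ⬝ᵥ
        (G.lapMatrix R *ᵥ fun v => if v ∈ S then c else d) =
      (c - d) ^ 2 * #(G.edgeBoundary S) := by
  have hcross : ∀ i j, (if G.Adj i j then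
        ((if i ∈ S then c else d) - if j ∈ S then c else d) ^ 2 else 0) =
      (c - d) ^ 2 * ((if (i, j) ∈ G.interedges S Sᶜ then 1 else 0) +
        if (i, j) ∈ G.interedges Sᶜ S then 1 else 0) := by
    intro i j
    by_cases hij : G.Adj i j <;> by_cases hi : i ∈ S <;> by_cases hj : j ∈ S <;>
      simp [mk_mem_interedges_iff, hij, hi, hj, sub_sq_comm d c]
  have hcomm : #(G.interedges Sᶜ S) = #(G.interedges S Sᶜ) :=
    have := G.symm; Rel.card_interedges_comm Sᶜ S
  rw [← toLinearMap₂'_apply', lapMatrix_toLinearMap₂']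
  simp only [hcross, ← mul_sum]
  rw [← Fintype.sum_prod_type' (f := fun i j =>
    (if (i, j) ∈ G.interedges S Sᶜ then (1 : R) else 0) +
      if (i, j) ∈ G.interedges Sᶜ S then 1 else 0)]
  simp only [sum_add_distrib, sum_ite_mem, univ_inter, sum_const, nsmul_one, hcomm,
    card_interedges_compl_eq_card_edgeBoundary]
  ring

theorem lambdaOne_le_div_of_sum_eq_zero {x : V → ℝ} (hx : x ≠ 0) (hsum : ∑ v, x v = 0) :
    G.lambdaOne ≤ x ⬝ᵥ (G.lapMatrix ℝ *ᵥ x) / (x ⬝ᵥ x) := by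
  refine csInf_le ⟨0, ?_⟩ ⟨x, hx, hsum, rfl⟩
  rintro _ ⟨y, -, -, rfl⟩
  have hLy := (G.posSemidef_lapMatrix ℝ).dotProduct_mulVec_nonneg y
  rw [star_trivial] at hLy
  exact div_nonneg hLy (dotProduct_self_star_nonneg y)

theorem lambdaOne_le_two_mul_card_edgeBoundary_div {S : Finset V} (hS : S.Nonempty)
    (hS' : S ≠ univ) :
    G.lambdaOne ≤ 2 * ((G.edgeBoundary S).card / (min S.card Sᶜ.card : ℝ)) := by
  set a : ℝ := ((#S : ℕ) : ℝ)
  set b : ℝ := ((#Sᶜ : ℕ) : ℝ)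
  set C : ℝ := ((#(G.edgeBoundary S) : ℕ) : ℝ)
  have ha : 0 < a := Nat.cast_pos.mpr hS.card_pos
  have hb : 0 < b := Nat.cast_pos.mpr <| by
    rwa [card_pos, nonempty_iff_ne_empty, Ne, compl_eq_empty_iff]
  set x : V → ℝ := fun v => if v ∈ S then b else -a
  have hx : x ≠ 0 := fun h => by
    obtain ⟨v, hv⟩ := hS
    have := congrFun h v
    simp only [x, hv, if_true, Pi.zero_apply] at this
    exact hb.ne' this
  have hsum : ∑ v, x v = 0 := by
    simp only [x, sum_ite_mem_univ, nsmul_eq_mul]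
    ring
  have hxx : x ⬝ᵥ x = a * b * (a + b) := by
    simp only [x, dotProduct, ← sq, apply_ite (· ^ 2), sum_ite_mem_univ, nsmul_eq_mul]
    ring
  have hLx : x ⬝ᵥ (G.lapMatrix ℝ *ᵥ x) = (a + b) ^ 2 * C := by
    rw [dotProduct_lapMatrix_mulVec_ite]
    ring
  calc G.lambdaOne ≤ x ⬝ᵥ (G.lapMatrix ℝ *ᵥ x) / (x ⬝ᵥ x) :=
        G.lambdaOne_le_div_of_sum_eq_zero hx hsum
    _ = C * (a⁻¹ + b⁻¹) := by
        rw [hLx, hxx]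
        field_simp
        ring
    _ ≤ C * (2 / min a b) := by gcongr; exact inv_add_inv_le_two_div_min ha hb
    _ = 2 * (C / min a b) := by ring

end SimpleGraph

theorem lambdaOne_le_two_cheeger_general {V : Type*} [Fintype V] [DecidableEq V]
    (G : SimpleGraph V) [DecidableRel G.Adj]
    (hV : 2 ≤ Fintype.card V) :
    G.lambdaOne ≤ 2 * G.cheegerConstant := by
  have : Nontrivial V := Fintype.one_lt_card_iff_nontrivial.mp hV
  obtain ⟨u⟩ := this.to_nonempty
  rw [← div_le_iff₀' two_pos]
  refine le_csInf ⟨_, {u}, singleton_nonempty u, singleton_ne_univ u, rfl⟩ ?_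
  rintro _ ⟨S, hS, hSuniv, rfl⟩
  rw [div_le_iff₀' two_pos]
  exact G.lambdaOne_le_two_mul_card_edgeBoundary_div hS hSuniv

/-- **Dodziuk 1984, Alon–Milman 1985** (upper bound): for a connected graph on at least two
vertices, `λ₁(G) ≤ 2 h(G)`. -/
theorem lambdaOne_le_two_cheeger {V : Type*} [Fintype V] [DecidableEq V]
    (G : SimpleGraph V) [DecidableRel G.Adj]
    (hconn : G.Connected) (hV : 2 ≤ Fintype.card V) :
    G.lambdaOne ≤ 2 * G.cheegerConstant :=
  lambdaOne_le_two_cheeger_general G hV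
end

section
/- Let G be a finite simple graph on V vertices and let λ₁(G) denote the second-smallest eigenvalue of its Laplacian matrix. Then for every nonempty vertex subset S with 2·|S| ≤ V, one has λ₁(G) ≤ 2·|∂S|/|S|, where ∂S is the set of edges of G with exactly one endpoint in S. -/
/-! The test vector `x = |Sᶜ| 𝟙_S - |S| 𝟙_{Sᶜ}` is orthogonal to the constants, its Laplacian
quadratic form is `n² |∂S|` (each boundary edge contributes `(|Sᶜ| + |S|)²`) and `‖x‖² = |S| |Sᶜ| n`.
Its Rayleigh quotient gives `λ₁ ≤ n |∂S| / (|S| |Sᶜ|)`, and `n ≤ 2 |Sᶜ|` when `2 |S| ≤ n`. -/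

open Matrix Finset

namespace SimpleGraph

variable {V : Type*} [Fintype V] [DecidableEq V] (G : SimpleGraph V) [DecidableRel G.Adj]

theorem lambdaOne_le_rayleigh {x : V → ℝ} (hx : x ≠ 0) (hsum : ∑ v, x v = 0) :
    G.lambdaOne ≤ (x ⬝ᵥ (G.lapMatrix ℝ *ᵥ x)) / (x ⬝ᵥ x) := by
  refine csInf_le ⟨0, ?_⟩ ⟨x, hx, hsum, rfl⟩
  rintro r ⟨y, -, -, rfl⟩
  have hLy := (posSemidef_lapMatrix ℝ G).dotProduct_mulVec_nonneg y
  rw [star_trivial] at hLy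
  exact div_nonneg hLy (dotProduct_self_star_nonneg y)

theorem card_adj_mem_not_mem_eq_card_edgeBoundary (S : Finset V) :
    #(univ.filter fun p : V × V => G.Adj p.1 p.2 ∧ p.1 ∈ S ∧ p.2 ∉ S) =
      #(G.edgeBoundary S) := by
  refine card_bij (fun p _ => s(p.1, p.2)) ?_ ?_ ?_
  · rintro ⟨u, v⟩ hp
    simp only [mem_filter, mem_univ, true_and] at hp
    simp only [edgeBoundary, mem_filter, mem_edgeFinset, mem_edgeSet]
    exact ⟨hp.1, u, v, rfl, hp.2⟩
  · rintro ⟨u, v⟩ hp ⟨u', v'⟩ hp' h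
    simp only [mem_filter, mem_univ, true_and] at hp hp'
    rcases Sym2.eq_iff.mp h with ⟨rfl, rfl⟩ | ⟨rfl, rfl⟩
    · rfl
    · exact absurd hp.2.1 hp'.2.2
  · intro e he
    simp only [edgeBoundary, mem_filter, mem_edgeFinset] at he
    obtain ⟨hadj, u, v, rfl, hu, hv⟩ := he
    exact ⟨(u, v), by simpa [hu, hv] using hadj, rfl⟩

theorem dotProduct_lapMatrix_mulVec_ite_s4 (S : Finset V) (a b : ℝ) :
    let x : V → ℝ := fun v => if v ∈ S then a else b
    x ⬝ᵥ (G.lapMatrix ℝ *ᵥ x) = (a - b) ^ 2 * #(G.edgeBoundary S) := by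
  intro x
  have hsplit : ∀ i j, (if G.Adj i j then (x i - x j) ^ 2 else 0) =
      (a - b) ^ 2 * ((if G.Adj i j ∧ i ∈ S ∧ j ∉ S then 1 else 0) +
        (if G.Adj j i ∧ j ∈ S ∧ i ∉ S then 1 else 0)) := by
    intro i j
    by_cases hij : G.Adj i j
    · by_cases hi : i ∈ S <;> by_cases hj : j ∈ S <;> simp [x, hij, hij.symm, hi, hj, sub_sq_comm]
    · have hji : ¬G.Adj j i := fun h => hij h.symm
      simp [hij, hji]
  have hcount : ∑ i, ∑ j, (if G.Adj i j ∧ i ∈ S ∧ j ∉ S then 1 else 0 : ℝ) =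
      #(G.edgeBoundary S) := by
    rw [← Fintype.sum_prod_type', sum_boole, card_adj_mem_not_mem_eq_card_edgeBoundary]
  rw [← toLinearMap₂'_apply', lapMatrix_toLinearMap₂']
  simp_rw [hsplit, ← mul_sum, sum_add_distrib]
  rw [sum_comm (f := fun i j => if G.Adj j i ∧ j ∈ S ∧ i ∉ S then (1 : ℝ) else 0), hcount]
  ring

theorem lambdaOne_le_card_mul_card_edgeBoundary_div (S : Finset V) (hS : S.Nonempty)
    (hSc : Sᶜ.Nonempty) :
    G.lambdaOne ≤ Fintype.card V * #(G.edgeBoundary S) / ((#S : ℝ) * #Sᶜ) := by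
  set s : ℝ := (#S : ℝ)
  set t : ℝ := (#Sᶜ : ℝ)
  have hs : 0 < s := by simpa [s] using hS.card_pos
  have ht : 0 < t := by simpa [t] using hSc.card_pos
  have hn : (Fintype.card V : ℝ) = s + t := by
    simp only [s, t]; exact_mod_cast S.card_add_card_compl.symm
  have hsum_ite : ∀ a b : ℝ, ∑ v, (if v ∈ S then a else b) = s * a + t * b := fun a b => by
    rw [sum_ite]; simp [s, t, filter_not, compl_eq_univ_sdiff]
  set x : V → ℝ := fun v => if v ∈ S then t else -s
  have hx : x ≠ 0 := fun h => by
    obtain ⟨v, hv⟩ := hS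
    simpa [x, hv, ht.ne'] using congrFun h v
  have hsum : ∑ v, x v = 0 := by
    rw [hsum_ite]; ring
  have hxx : x ⬝ᵥ x = s * t * (s + t) := by
    calc x ⬝ᵥ x = ∑ v, (if v ∈ S then t ^ 2 else s ^ 2) := by
          simp only [dotProduct, x]; congr! 1 with v; split_ifs <;> ring
      _ = s * t * (s + t) := by rw [hsum_ite]; ring
  calc G.lambdaOne ≤ (x ⬝ᵥ (G.lapMatrix ℝ *ᵥ x)) / (x ⬝ᵥ x) := G.lambdaOne_le_rayleigh hx hsum
    _ = _ := by
      rw [G.dotProduct_lapMatrix_mulVec_ite_s4 S t (-s), hxx, hn]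
      field_simp
      ring

end SimpleGraph

/-- For any finite simple graph `G` on `V` vertices and any nonempty vertex subset `S` with
`2|S| ≤ V`, the second-smallest Laplacian eigenvalue satisfies `λ₁(G) ≤ 2 |∂S| / |S|`. -/
theorem lambdaOne_le_two_boundary_div_card {V : Type*} [Fintype V] [DecidableEq V]
    (G : SimpleGraph V) [DecidableRel G.Adj]
    (S : Finset V) (hS : S.Nonempty) (hcard : 2 * S.card ≤ Fintype.card V) :
    G.lambdaOne ≤ 2 * (G.edgeBoundary S).card / (S.card : ℝ) := by
  have hn : S.card + Sᶜ.card = Fintype.card V := S.card_add_card_compl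
  have hSc : Sᶜ.Nonempty := by
    rw [← card_pos]; have := hS.card_pos; omega
  have hs : (0 : ℝ) < S.card := by exact_mod_cast hS.card_pos
  have ht : (0 : ℝ) < Sᶜ.card := by exact_mod_cast hSc.card_pos
  have hn_le : (Fintype.card V : ℝ) ≤ 2 * Sᶜ.card := by exact_mod_cast (by omega)
  calc G.lambdaOne
      ≤ Fintype.card V * (G.edgeBoundary S).card / ((S.card : ℝ) * Sᶜ.card) :=
        G.lambdaOne_le_card_mul_card_edgeBoundary_div S hS hSc
    _ ≤ 2 * Sᶜ.card * (G.edgeBoundary S).card / ((S.card : ℝ) * Sᶜ.card) := by gcongr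
    _ = 2 * (G.edgeBoundary S).card / (S.card : ℝ) := by field_simp
end
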